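/- For every integer c ≥ 1 and every (K_{c×2}, c)-cockade G on n vertices, the total number of cliques in G (including the empty clique) equals (1/c) · (3^c - 2^c) · (n - c) + 2^c. -/
import Mathlib


/-- The total number of cliques of `G` (including the empty clique). -/
noncomputable def SimpleGraph.totalCliqueCount {V : Type*} (G : SimpleGraph V) : ℕ :=
  {s : Finset V | G.IsClique (s : Set V)}.ncard

/-- An `(H, r)`-cockade: either a copy of `H`, or obtained by pasting two smaller
`(H, r)`-cockades on an `r`-clique (the pasted parts cover the graph, intersect in an
`r`-clique, and have no edges between their proper parts). -/
inductive SimpleGraph.IsCockade {W : Type} (H : SimpleGraph W) (r : ℕ) :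
    {V : Type} → SimpleGraph V → Prop
  | base {V : Type} (G : SimpleGraph V) : Nonempty (G ≃g H) → SimpleGraph.IsCockade H r G
  | paste {V : Type} (G : SimpleGraph V) (A B : Set V)
      (hunion : A ∪ B = Set.univ) (hcard : (A ∩ B).ncard = r)
      (hclique : G.IsClique (A ∩ B))
      (hcross : ∀ u ∈ A \ B, ∀ v ∈ B \ A, ¬ G.Adj u v)
      (h₁ : SimpleGraph.IsCockade H r (G.induce A))
      (h₂ : SimpleGraph.IsCockade H r (G.induce B)) : SimpleGraph.IsCockade H r G

/-- `K_{c×2}`, the complete `c`-partite graph with all parts of size 2. -/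
def Kc2 (c : ℕ) : SimpleGraph (Σ _ : Fin c, Fin 2) :=
  SimpleGraph.completeMultipartiteGraph fun _ : Fin c => Fin 2

lemma mem_clique_map {V W : Type*} {G : SimpleGraph V} {H : SimpleGraph W}
    (e : G ≃g H) (s : Finset V) (hs : s ∈ {s : Finset V | G.IsClique (s : Set V)}) :
    s.map e.toEquiv.toEmbedding ∈ {s : Finset W | H.IsClique (s : Set W)} := by
  rw [Set.mem_setOf_eq] at hs ⊢
  rw [Finset.coe_map]
  intro x hx y hy hxy
  obtain ⟨x, hxs, rfl⟩ := hx
  obtain ⟨y, hys, rfl⟩ := hy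
  have hxy' : x ≠ y := fun h => hxy (by simp only [h])
  exact e.map_adj_iff.mpr (hs hxs hys hxy')

lemma totalCliqueCount_congr {V W : Type*} {G : SimpleGraph V} {H : SimpleGraph W}
    (e : G ≃g H) : G.totalCliqueCount = H.totalCliqueCount := by
  classical
  rw [SimpleGraph.totalCliqueCount, SimpleGraph.totalCliqueCount,
    ← Nat.card_coe_set_eq, ← Nat.card_coe_set_eq]
  refine Nat.card_congr
    ⟨fun s => ⟨s.1.map e.toEquiv.toEmbedding, mem_clique_map e s.1 s.2⟩,
     fun s => ⟨s.1.map e.symm.toEquiv.toEmbedding, mem_clique_map e.symm s.1 s.2⟩, ?_, ?_⟩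
  · rintro ⟨s, hs⟩
    ext x
    simp only []
    constructor
    · intro hx
      obtain ⟨y, hy, hyx⟩ := Finset.mem_map.mp hx
      obtain ⟨z, hz, hzy⟩ := Finset.mem_map.mp hy
      have hzx : z = x := by
        rw [← hyx, ← hzy]
        exact (e.symm_apply_apply z).symm
      rwa [← hzx]
    · intro hx
      exact Finset.mem_map.mpr ⟨e x, Finset.mem_map.mpr ⟨x, hx, rfl⟩, e.symm_apply_apply x⟩
  · rintro ⟨s, hs⟩
    ext x
    simp only []
    constructor
    · intro hx
      obtain ⟨y, hy, hyx⟩ := Finset.mem_map.mp hx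
      obtain ⟨z, hz, hzy⟩ := Finset.mem_map.mp hy
      have hzx : z = x := by
        rw [← hyx, ← hzy]
        exact (e.apply_symm_apply z).symm
      rwa [← hzx]
    · intro hx
      exact Finset.mem_map.mpr ⟨e.symm x, Finset.mem_map.mpr ⟨x, hx, rfl⟩, e.apply_symm_apply x⟩

lemma isClique_induce_iff {V : Type*} (G : SimpleGraph V) (A : Set V) (t : Set ↥A) :
    (G.induce A).IsClique t ↔ G.IsClique (Subtype.val '' t) := by
  constructor
  · intro h x hx y hy hxy
    obtain ⟨x, hxt, rfl⟩ := hx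
    obtain ⟨y, hyt, rfl⟩ := hy
    have : x ≠ y := fun hh => hxy (by rw [hh])
    exact h hxt hyt this
  · intro h x hx y hy hxy
    exact h ⟨x, hx, rfl⟩ ⟨y, hy, rfl⟩ (fun hh => hxy (Subtype.val_injective hh))

lemma ncard_cliques_subset {V : Type*} (G : SimpleGraph V) (A : Set V) :
    {s : Finset V | G.IsClique (s : Set V) ∧ (s : Set V) ⊆ A}.ncard
      = (G.induce A).totalCliqueCount := by
  classical
  have hinj : Function.Injective
      (fun t : Finset ↥A => t.map (Function.Embedding.subtype (· ∈ A))) :=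
    fun t₁ t₂ h => Finset.map_injective _ h
  have himg : (fun t : Finset ↥A => t.map (Function.Embedding.subtype (· ∈ A))) ''
      {t : Finset ↥A | (G.induce A).IsClique (t : Set ↥A)}
      = {s : Finset V | G.IsClique (s : Set V) ∧ (s : Set V) ⊆ A} := by
    ext s
    constructor
    · rintro ⟨t, ht, rfl⟩
      have hco : ((t.map (Function.Embedding.subtype (· ∈ A)) : Finset V) : Set V)
          = Subtype.val '' (t : Set ↥A) := by
        rw [Finset.coe_map, Function.Embedding.coe_subtype]
      refine ⟨?_, ?_⟩
      · rw [hco, ← isClique_induce_iff]; exact ht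
      · rw [hco]; rintro x ⟨y, _, rfl⟩; exact y.2
    · rintro ⟨hcl, hsub⟩
      refine ⟨s.subtype (· ∈ A), ?_, ?_⟩
      · have hmap : (s.subtype (· ∈ A)).map (Function.Embedding.subtype (· ∈ A))
            = s := by
          rw [Finset.subtype_map, Finset.filter_true_of_mem]
          intro x hx; exact hsub hx
        have hco : Subtype.val '' ((s.subtype (· ∈ A) : Finset ↥A) : Set ↥A)
            = (s : Set V) := by
          conv_rhs => rw [← hmap]
          rw [Finset.coe_map, Function.Embedding.coe_subtype]
        rw [Set.mem_setOf_eq, isClique_induce_iff, hco]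
        exact hcl
      · show (s.subtype (· ∈ A)).map (Function.Embedding.subtype (· ∈ A)) = s
        rw [Finset.subtype_map, Finset.filter_true_of_mem]
        intro x hx; exact hsub hx
  rw [SimpleGraph.totalCliqueCount, ← himg, Set.ncard_image_of_injective _ hinj]

lemma totalCliqueCount_Kc2 (c : ℕ) : (Kc2 c).totalCliqueCount = 3 ^ c := by
  classical
  have adj_iff : ∀ x y : Σ _ : Fin c, Fin 2, (Kc2 c).Adj x y ↔ x.1 ≠ y.1 := by
    intro x y; rfl
  have key : {s : Finset (Σ _ : Fin c, Fin 2) | (Kc2 c).IsClique (s : Set _)}.ncard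
      = Nat.card (Fin c → Option (Fin 2)) := by
    rw [← Nat.card_coe_set_eq]
    have hclF : ∀ f : Fin c → Option (Fin 2),
        (Kc2 c).IsClique ((Finset.univ.filter
          (fun x : Σ _ : Fin c, Fin 2 => f x.1 = some x.2) : Finset _) : Set _) := by
      intro f x hx y hy hxy
      simp only [Finset.coe_filter, Set.mem_setOf_eq, Finset.mem_univ, true_and] at hx hy
      rw [adj_iff]
      intro h
      apply hxy
      obtain ⟨x1, x2⟩ := x; obtain ⟨y1, y2⟩ := y
      simp only at h hx hy
      subst h
      rw [hx] at hy
      simp only [Option.some_inj] at hy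
      rw [hy]
    refine Nat.card_congr (Equiv.ofBijective
      (fun f : Fin c → Option (Fin 2) =>
        (⟨Finset.univ.filter (fun x : Σ _ : Fin c, Fin 2 => f x.1 = some x.2), hclF f⟩ :
          {s : Finset (Σ _ : Fin c, Fin 2) | (Kc2 c).IsClique (s : Set _)})) ⟨?_, ?_⟩).symm
    · intro f g hfg
      have h' := congrArg Subtype.val hfg
      simp only at h'
      rw [Finset.ext_iff] at h'
      have hmem : ∀ x : Σ _ : Fin c, Fin 2, (f x.1 = some x.2) ↔ (g x.1 = some x.2) := by
        intro x
        have := h' x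
        simpa using this
      funext i
      cases hf : f i with
      | none =>
        cases hg : g i with
        | none => rfl
        | some j =>
          have := (hmem ⟨i, j⟩).mpr hg
          simp only at this
          rw [hf] at this
          exact absurd this (by simp)
      | some j =>
        have := (hmem ⟨i, j⟩).mp hf
        simp only at this
        rw [this]
    · rintro ⟨s, hs⟩
      refine ⟨fun i => if h : ∃ j, (⟨i, j⟩ : Σ _ : Fin c, Fin 2) ∈ s then some h.choose
        else none, ?_⟩
      ext1
      simp only
      ext x
      simp only [Finset.mem_filter, Finset.mem_univ, true_and]
      constructor
      · intro hx
        obtain ⟨i, j⟩ := x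
        simp only at hx
        split at hx
        · next h =>
          have hcs := h.choose_spec
          simp only [Option.some_inj] at hx
          rw [← hx]; exact hcs
        · exact absurd hx (by simp)
      · intro hx
        obtain ⟨i, j⟩ := x
        simp only at hx ⊢
        have hex : ∃ j', (⟨i, j'⟩ : Σ _ : Fin c, Fin 2) ∈ s := ⟨j, hx⟩
        rw [dif_pos hex]
        have hcs := hex.choose_spec
        by_cases heq : hex.choose = j
        · rw [heq]
        · exfalso
          have hne : (⟨i, hex.choose⟩ : Σ _ : Fin c, Fin 2) ≠ ⟨i, j⟩ := by
            intro h
            obtain ⟨-, h2⟩ := Sigma.mk.inj_iff.mp h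
            exact heq (eq_of_heq h2)
          have hadj := hs hcs hx hne
          rw [adj_iff] at hadj
          exact hadj rfl
  have : (Kc2 c).totalCliqueCount
      = {s : Finset (Σ _ : Fin c, Fin 2) | (Kc2 c).IsClique (s : Set _)}.ncard := rfl
  rw [this, key, Nat.card_eq_fintype_card]
  simp

lemma cockade_count (c : ℕ) (hc : 1 ≤ c) {V : Type} (G : SimpleGraph V)
    (hG : (Kc2 c).IsCockade c G) :
    ∀ (_ : Fintype V), (G.totalCliqueCount : ℚ) =
      (1 / (c : ℚ)) * ((3 : ℚ) ^ c - (2 : ℚ) ^ c) * ((Fintype.card V : ℚ) - c)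
        + (2 : ℚ) ^ c := by
  have hc0 : (c : ℚ) ≠ 0 := by positivity
  induction hG with
  | @base V' G he =>
    intro inst
    obtain ⟨e⟩ := he
    have hcard : Fintype.card V' = 2 * c := by
      rw [Fintype.card_congr e.toEquiv]
      simp [Fintype.card_sigma, mul_comm]
    rw [totalCliqueCount_congr e, totalCliqueCount_Kc2, hcard]
    push_cast
    field_simp
    ring
  | @paste V' G A B hunion hcard hclique hcross h₁ h₂ ih₁ ih₂ =>
    intro inst
    classical
    haveI : Fintype ↥A := Fintype.ofFinite ↥A
    haveI : Fintype ↥B := Fintype.ofFinite ↥B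
    set SA := {s : Finset V' | G.IsClique (s : Set V') ∧ (s : Set V') ⊆ A} with hSA
    set SB := {s : Finset V' | G.IsClique (s : Set V') ∧ (s : Set V') ⊆ B} with hSB
    have hSunion : SA ∪ SB = {s : Finset V' | G.IsClique (s : Set V')} := by
      ext s
      simp only [Set.mem_union, hSA, hSB, Set.mem_setOf_eq]
      constructor
      · rintro (⟨h, _⟩ | ⟨h, _⟩) <;> exact h
      · intro hcl
        by_cases hA : (s : Set V') ⊆ A
        · exact Or.inl ⟨hcl, hA⟩
        · right
          refine ⟨hcl, ?_⟩
          rw [Set.not_subset] at hA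
          obtain ⟨u, hus, huA⟩ := hA
          have huB : u ∈ B := by
            have hm : u ∈ A ∪ B := by rw [hunion]; trivial
            exact ((Set.mem_union u A B).mp hm).resolve_left huA
          intro v hvs
          by_contra hvB
          have hvA : v ∈ A := by
            have hm : v ∈ A ∪ B := by rw [hunion]; trivial
            exact ((Set.mem_union v A B).mp hm).resolve_right hvB
          have hne : v ≠ u := fun h => huA (h ▸ hvA)
          exact hcross v ⟨hvA, hvB⟩ u ⟨huB, huA⟩ (hcl hvs hus hne)
    have hSinter : SA ∩ SB = ((A ∩ B).toFinset.powerset : Set (Finset V')) := by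
      ext s
      simp only [Set.mem_inter_iff, hSA, hSB, Set.mem_setOf_eq, Finset.mem_coe,
        Finset.mem_powerset]
      constructor
      · rintro ⟨⟨_, hA⟩, ⟨_, hB⟩⟩
        intro x hx
        rw [Set.mem_toFinset]
        exact ⟨hA hx, hB hx⟩
      · intro hsub
        have hsub' : (s : Set V') ⊆ A ∩ B := by
          intro x hx
          have := hsub hx
          rwa [Set.mem_toFinset] at this
        exact ⟨⟨hclique.subset hsub', fun x hx => (hsub' hx).1⟩,
          ⟨hclique.subset hsub', fun x hx => (hsub' hx).2⟩⟩
    have hinterCard : (SA ∩ SB).ncard = 2 ^ c := by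
      have hcc : (A ∩ B).toFinset.card = c := by
        rw [← Set.ncard_eq_toFinset_card', hcard]
      rw [hSinter, Set.ncard_coe_finset, Finset.card_powerset, hcc]
    have hkey : G.totalCliqueCount + 2 ^ c = SA.ncard + SB.ncard := by
      rw [SimpleGraph.totalCliqueCount, ← hSunion, ← hinterCard]
      exact Set.ncard_union_add_ncard_inter SA SB (Set.toFinite _) (Set.toFinite _)
    have hcardA : SA.ncard = (G.induce A).totalCliqueCount := ncard_cliques_subset G A
    have hcardB : SB.ncard = (G.induce B).totalCliqueCount := ncard_cliques_subset G B
    have hAB : Fintype.card ↥A + Fintype.card ↥B = Fintype.card V' + c := by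
      have h1 : A.ncard + B.ncard = (A ∪ B).ncard + (A ∩ B).ncard :=
        (Set.ncard_union_add_ncard_inter A B (Set.toFinite _) (Set.toFinite _)).symm
      rw [hunion, hcard, Set.ncard_univ, Nat.card_eq_fintype_card] at h1
      rw [← Nat.card_coe_set_eq, ← Nat.card_coe_set_eq,
        Nat.card_eq_fintype_card, Nat.card_eq_fintype_card] at h1
      omega
    have e1 := ih₁ ‹Fintype ↥A›
    have e2 := ih₂ ‹Fintype ↥B›
    have hkeyQ : (G.totalCliqueCount : ℚ) =
        ((G.induce A).totalCliqueCount : ℚ) + ((G.induce B).totalCliqueCount : ℚ)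
          - (2 : ℚ) ^ c := by
      have h0 := hkey
      rw [hcardA, hcardB] at h0
      have h' : ((G.totalCliqueCount : ℚ)) + 2 ^ c
          = ((G.induce A).totalCliqueCount : ℚ) + ((G.induce B).totalCliqueCount : ℚ) := by
        exact_mod_cast congrArg (fun k : ℕ => (k : ℚ)) h0
      linarith
    have hABQ : (Fintype.card ↥A : ℚ) + (Fintype.card ↥B : ℚ)
        = (Fintype.card V' : ℚ) + c := by exact_mod_cast hAB
    rw [hkeyQ, e1, e2]
    field_simp
    linear_combination ((3:ℚ)^c - 2^c) * hABQ

/-- In every `(K_{c×2}, c)`-cockade on `n` vertices, the total number of cliques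
(including the empty clique) equals `(1/c) * (3^c - 2^c) * (n - c) + 2^c`. -/
theorem totalCliqueCount_cockade (c : ℕ) (hc : 1 ≤ c)
    (V : Type) [Fintype V] (G : SimpleGraph V) (hG : (Kc2 c).IsCockade c G)
    (n : ℕ) (hn : Fintype.card V = n) :
    (G.totalCliqueCount : ℚ) =
      (1 / (c : ℚ)) * ((3 : ℚ) ^ c - (2 : ℚ) ^ c) * ((n : ℚ) - c) + (2 : ℚ) ^ c := by
  subst hn
  exact cockade_count c hc G hG ‹Fintype V›
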